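/- arXiv:2108.06733 — 4 statements merged into one kernel-verified Lean document; each statement's English description precedes it below -/
import Mathlib

section
/- Let G satisfy the (r+d+1)-strong neighbourhood property. Let Z be any vertex subset, call a vertex v 'bad' if there exists a vertex w ≠ v with #((N[v] \ N[w]) ∩ Z) ≤ r−1, and let Z_b be the union of closed neighbourhoods N[v] over bad vertices v. Then Z ∪ Z_b is an identification code for G with index r. -/
open Finset SimpleGraph

/-- If `G` has the `(r+d+1)`-strong neighbourhood property, `Z` is any vertex set,
`bad v` means some `w ≠ v` has `#((N[v] \ N[w]) ∩ Z) ≤ r-1`, and `Zb` is the union of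
closed neighbourhoods of bad vertices, then `Z ∪ Zb` is an identification code of
index `r`. -/
theorem stmt_6 {V : Type*} [Fintype V] [DecidableEq V]
    (G : SimpleGraph V) [DecidableRel G.Adj] (r d : ℕ) (hr : 1 ≤ r) (hd : 1 ≤ d)
    (hstrong : ∀ u v : V, u ≠ v →
      r + d + 1 ≤ ((insert v (G.neighborFinset v)) \ (insert u (G.neighborFinset u))).card)
    (Z Zb : Finset V)
    (bad : V → Prop)
    (hbad : ∀ v : V, bad v ↔ ∃ w : V, w ≠ v ∧
      (((insert v (G.neighborFinset v)) \ (insert w (G.neighborFinset w))) ∩ Z).card ≤ r - 1)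
    (hZb : ∀ x : V, x ∈ Zb ↔ ∃ v : V, bad v ∧ x ∈ insert v (G.neighborFinset v)) :
    ∀ u v : V, u ≠ v →
      r ≤ (((insert v (G.neighborFinset v)) \ (insert u (G.neighborFinset u)))
            ∩ (Z ∪ Zb)).card := by
  intro u v huv
  by_cases hv : bad v
  · -- N[v] ⊆ Zb, so (N[v]\N[u]) ∩ (Z ∪ Zb) = N[v]\N[u]
    have hsub : (insert v (G.neighborFinset v)) \ (insert u (G.neighborFinset u)) ⊆
        ((insert v (G.neighborFinset v)) \ (insert u (G.neighborFinset u))) ∩ (Z ∪ Zb) := by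
      intro x hx
      refine mem_inter.mpr ⟨hx, mem_union_right _ ?_⟩
      exact (hZb x).mpr ⟨v, hv, (mem_sdiff.mp hx).1⟩
    have := card_le_card hsub
    have h2 := hstrong u v huv
    omega
  · have hw : ¬ (((insert v (G.neighborFinset v)) \ (insert u (G.neighborFinset u))) ∩ Z).card ≤ r - 1 := by
      intro h
      exact hv ((hbad v).mpr ⟨u, huv, h⟩)
    have hsub : ((insert v (G.neighborFinset v)) \ (insert u (G.neighborFinset u))) ∩ Z ⊆
        ((insert v (G.neighborFinset v)) \ (insert u (G.neighborFinset u))) ∩ (Z ∪ Zb) :=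
      inter_subset_inter_left subset_union_left
    have := card_le_card hsub
    omega
end

section
/- Let m ≥ r + d + 1 with integers r ≥ 1, d ≥ 1, suppose m ≤ Δ + 1, and let 0 ≤ q ≤ 1. Then Σ_{l=0}^{r−1} C(m, l) q^l (1−q)^{m−l} ≤ r(Δ+1)^{r−1}(1−q)^{d+2}. -/
open Finset

/-- Binomial lower-tail bound: if `r + d + 1 ≤ m ≤ Δ + 1` then
`Σ_{l<r} C(m,l) q^l (1-q)^{m-l} ≤ r (Δ+1)^{r-1} (1-q)^{d+2}`. -/
theorem stmt_10 (r d m Δ : ℕ) (hr : 1 ≤ r) (hd : 1 ≤ d)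
    (hm : r + d + 1 ≤ m) (hmΔ : m ≤ Δ + 1) (q : ℝ) (hq0 : 0 ≤ q) (hq1 : q ≤ 1) :
    ∑ l ∈ Finset.range r, (m.choose l : ℝ) * q ^ l * (1 - q) ^ (m - l) ≤
      (r : ℝ) * ((Δ : ℝ) + 1) ^ (r - 1) * (1 - q) ^ (d + 2) := by
  have h1q0 : (0:ℝ) ≤ 1 - q := by linarith
  have h1q1 : (1:ℝ) - q ≤ 1 := by linarith
  have key : ∀ l ∈ Finset.range r,
      (m.choose l : ℝ) * q ^ l * (1 - q) ^ (m - l) ≤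
        ((Δ : ℝ) + 1) ^ (r - 1) * (1 - q) ^ (d + 2) := by
    intro l hl
    rw [Finset.mem_range] at hl
    have hcb : (m.choose l : ℝ) * q ^ l ≤ ((Δ : ℝ) + 1) ^ (r - 1) := by
      have h1 : (m.choose l : ℝ) ≤ ((Δ : ℝ) + 1) ^ (r - 1) := by
        have hn : m.choose l ≤ (Δ + 1) ^ (r - 1) :=
          le_trans (Nat.choose_le_pow m l)
            (Nat.pow_le_pow_left hmΔ l |>.trans
              (Nat.pow_le_pow_right (by omega) (by omega)))
        calc (m.choose l : ℝ) ≤ (((Δ + 1) ^ (r - 1) : ℕ) : ℝ) := by exact_mod_cast hn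
          _ = ((Δ : ℝ) + 1) ^ (r - 1) := by push_cast; ring
      have h2 : q ^ l ≤ 1 := pow_le_one₀ hq0 hq1
      calc (m.choose l : ℝ) * q ^ l ≤ (m.choose l : ℝ) * 1 := by
            exact mul_le_mul_of_nonneg_left h2 (by positivity)
        _ = (m.choose l : ℝ) := by ring
        _ ≤ _ := h1
    have hpow : (1 - q) ^ (m - l) ≤ (1 - q) ^ (d + 2) := by
      apply pow_le_pow_of_le_one h1q0 h1q1
      omega
    calc (m.choose l : ℝ) * q ^ l * (1 - q) ^ (m - l)
        ≤ ((Δ : ℝ) + 1) ^ (r - 1) * (1 - q) ^ (m - l) := by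
          exact mul_le_mul_of_nonneg_right hcb (by positivity)
      _ ≤ _ := by exact mul_le_mul_of_nonneg_left hpow (by positivity)
  calc ∑ l ∈ Finset.range r, (m.choose l : ℝ) * q ^ l * (1 - q) ^ (m - l)
      ≤ ∑ l ∈ Finset.range r, ((Δ : ℝ) + 1) ^ (r - 1) * (1 - q) ^ (d + 2) :=
        Finset.sum_le_sum key
    _ = (r : ℝ) * (((Δ : ℝ) + 1) ^ (r - 1) * (1 - q) ^ (d + 2)) := by
        rw [Finset.sum_const, Finset.card_range]; simp [nsmul_eq_mul]
    _ = _ := by ring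
end

section
/- If G is a graph on n vertices with maximum degree Δ ≥ 2 satisfying the (r+d+1)-strong neighbourhood property for integers r ≥ 1 and d ≥ 1, then G admits an identification code with index r of size at most n(1 − c(d,r)/(Δ+1)^{(r+2)/d}), where c(d,r) = d(d+1)^{−1−1/d}(2r)^{−1/d}. Consequently, the minimum size θ_n of such a code satisfies n/(Δ+1) ≤ θ_n ≤ n(1 − c(d,r)/(Δ+1)^{(r+2)/d}). -/
/-!
Put every vertex into a random set `S` independently with probability `p` and take the
complement of `S` as a first code. It fails for a pair `u ≠ v` only when `S` contains all but at
most `r - 1` points of `N[v] \ N[u]`, a set of size between `r + d + 1` and `Δ + 1`; this has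
probability at most `(Δ + 1)^(r-1) p^(d+2)`. Only pairs at distance at most two give new sets
(otherwise `N[v] \ N[u] = N[v]`), so there are at most `n (Δ + 1)²` such events, and repairing
each one by adding `r` of its points to the code costs `r` vertices. The expected size of the
repaired code is at most `n - p n + r n (Δ + 1)^(r+1) p^(d+2)`, and `p = B^(-1/d)` with
`B = (d + 1) 2r (Δ + 1)^(r+2)` makes this at most `n (1 - c(d, r) / (Δ + 1)^((r+2)/d))`.
The lower bound holds because an identification code of index `r ≥ 1` is dominating.
-/

open Finset SimpleGraph

section BernoulliWeight

variable {V : Type*} [Fintype V] [DecidableEq V]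

/-- The probability of `S` when every element is put into `S` independently with probability `p`. -/
noncomputable def bernoulliWeight (p : ℝ) (S : Finset V) : ℝ := p ^ #S * (1 - p) ^ #Sᶜ

lemma bernoulliWeight_nonneg {p : ℝ} (h0 : 0 ≤ p) (h1 : p ≤ 1) (S : Finset V) :
    0 ≤ bernoulliWeight p S := by
  have := sub_nonneg.2 h1
  unfold bernoulliWeight
  positivity

lemma bernoulliWeight_pos {p : ℝ} (h0 : 0 < p) (h1 : p < 1) (S : Finset V) :
    0 < bernoulliWeight p S := by
  have := sub_pos.2 h1
  unfold bernoulliWeight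
  positivity

lemma sum_bernoulliWeight_filter_subset (p : ℝ) (K : Finset V) :
    ∑ S with K ⊆ S, bernoulliWeight p S = p ^ #K := by
  have hfactor : ∀ S : Finset V, (∏ v ∈ Sᶜ, if v ∈ K then 0 else 1 - p) =
      if K ⊆ S then (1 - p) ^ #Sᶜ else 0 := by
    intro S
    split_ifs with hKS
    · exact prod_eq_pow_card fun v hv => if_neg fun hvK => mem_compl.1 hv (hKS hvK)
    · obtain ⟨v, hvK, hvS⟩ := not_subset.1 hKS
      exact prod_eq_zero (mem_compl.2 hvS) (if_pos hvK)
  have h := Fintype.prod_add (fun _ : V => p) (fun v => if v ∈ K then 0 else 1 - p)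
  simp only [prod_const, hfactor, mul_ite, mul_zero] at h
  simp only [sum_filter, bernoulliWeight]
  rw [← h]
  simp [apply_ite (p + ·)]

lemma sum_bernoulliWeight (p : ℝ) : ∑ S : Finset V, bernoulliWeight p S = 1 := by
  simpa using sum_bernoulliWeight_filter_subset p (∅ : Finset V)

lemma sum_bernoulliWeight_mul_card (p : ℝ) :
    ∑ S : Finset V, bernoulliWeight p S * #S = p * Fintype.card V := by
  calc ∑ S : Finset V, bernoulliWeight p S * #S
      = ∑ v : V, ∑ S with {v} ⊆ S, bernoulliWeight p S := by
        simp only [singleton_subset_iff, sum_filter]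
        rw [sum_comm]
        refine sum_congr rfl fun S _ => ?_
        rw [sum_ite_mem, univ_inter, sum_const, nsmul_eq_mul, mul_comm]
    _ = p * Fintype.card V := by
        simp only [sum_bernoulliWeight_filter_subset, card_singleton, pow_one, sum_const,
          card_univ, nsmul_eq_mul, mul_comm]

lemma sum_bernoulliWeight_filter_le_card_inter_le {p : ℝ} (h0 : 0 ≤ p) (h1 : p ≤ 1)
    (T : Finset V) (m : ℕ) :
    ∑ S with m ≤ #(T ∩ S), bernoulliWeight p S ≤ (#T).choose m * p ^ m := by
  -- union bound over the `m`-subsets of `T` that may lie in `S`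
  calc ∑ S with m ≤ #(T ∩ S), bernoulliWeight p S
      ≤ ∑ S : Finset V, ∑ K ∈ T.powersetCard m, if K ⊆ S then bernoulliWeight p S else 0 := by
        rw [sum_filter]
        refine sum_le_sum fun S _ => ?_
        have hterm : ∀ K : Finset V, 0 ≤ if K ⊆ S then bernoulliWeight p S else 0 :=
          fun K => ite_nonneg (bernoulliWeight_nonneg h0 h1 S) le_rfl
        split_ifs with hm
        · obtain ⟨K, hKTS, hK⟩ := exists_subset_card_eq hm
          have hKmem : K ∈ T.powersetCard m :=
            mem_powersetCard.2 ⟨hKTS.trans inter_subset_left, hK⟩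
          calc bernoulliWeight p S
              = if K ⊆ S then bernoulliWeight p S else 0 :=
                (if_pos (hKTS.trans inter_subset_right)).symm
            _ ≤ _ := single_le_sum (fun K' _ => hterm K') hKmem
        · exact sum_nonneg fun K _ => hterm K
    _ = ∑ K ∈ T.powersetCard m, p ^ #K := by
        rw [sum_comm]
        exact sum_congr rfl fun K _ => by rw [← sum_bernoulliWeight_filter_subset, sum_filter]
    _ = (#T).choose m * p ^ m := by
        rw [sum_congr rfl fun K hK => by rw [(mem_powersetCard.1 hK).2], sum_const,
          card_powersetCard, nsmul_eq_mul]

lemma exists_le_of_le_sum_bernoulliWeight_mul {p : ℝ} (h0 : 0 < p) (h1 : p < 1)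
    {f : Finset V → ℝ} {t : ℝ} (h : t ≤ ∑ S, bernoulliWeight p S * f S) : ∃ S, t ≤ f S := by
  have ht : ∑ S : Finset V, bernoulliWeight p S * t = t := by
    rw [← sum_mul, sum_bernoulliWeight, one_mul]
  obtain ⟨S, -, hS⟩ := exists_le_of_sum_le (univ_nonempty (α := Finset V)) (ht.trans_le h)
  exact ⟨S, le_of_mul_le_mul_left hS (bernoulliWeight_pos h0 h1 S)⟩

end BernoulliWeight

section MultipleHitting

variable {V : Type*} [Fintype V] [DecidableEq V]

/-- Alteration: complete `Sᶜ` by `r` points of every `T ∈ 𝒯` that `Sᶜ` meets in fewer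
than `r` points. -/
lemma exists_multipleHitting_card_add_card_le (𝒯 : Finset (Finset V)) {r : ℕ}
    (h𝒯 : ∀ T ∈ 𝒯, r ≤ #T) (S : Finset V) :
    ∃ C : Finset V, (∀ T ∈ 𝒯, r ≤ #(T ∩ C)) ∧
      #C + #S ≤ Fintype.card V + r * #{T ∈ 𝒯 | #(T \ S) < r} := by
  choose R hRT hR using fun T : Finset V => exists_subset_card_eq (min_le_right r #T)
  refine ⟨Sᶜ ∪ {T ∈ 𝒯 | #(T \ S) < r}.biUnion R, fun T hT => ?_, ?_⟩
  · have hRr : #(R T) = r := (hR T).trans (min_eq_left (h𝒯 T hT))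
    by_cases hbad : #(T \ S) < r
    · calc r = #(R T) := hRr.symm
        _ ≤ #(T ∩ (Sᶜ ∪ {T ∈ 𝒯 | #(T \ S) < r}.biUnion R)) :=
          card_le_card (subset_inter (hRT T)
            ((subset_biUnion_of_mem R (mem_filter.2 ⟨hT, hbad⟩)).trans subset_union_right))
    · calc r ≤ #(T \ S) := not_lt.1 hbad
        _ ≤ #(T ∩ (Sᶜ ∪ {T ∈ 𝒯 | #(T \ S) < r}.biUnion R)) := by
          rw [sdiff_eq_inter_compl]
          exact card_le_card (inter_subset_inter_left subset_union_left)
  · have hcompl := card_add_card_compl S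
    have hunion := card_union_le Sᶜ ({T ∈ 𝒯 | #(T \ S) < r}.biUnion R)
    have hbiUnion := card_biUnion_le_card_mul {T ∈ 𝒯 | #(T \ S) < r} R r
      fun T hT => (hR T).trans_le (min_le_left _ _)
    rw [mul_comm] at hbiUnion
    omega

lemma exists_multipleHitting_card_le (𝒯 : Finset (Finset V)) {r : ℕ} (h𝒯 : ∀ T ∈ 𝒯, r ≤ #T)
    {p : ℝ} (h0 : 0 < p) (h1 : p < 1) :
    ∃ C : Finset V, (∀ T ∈ 𝒯, r ≤ #(T ∩ C)) ∧
      (#C : ℝ) ≤ (1 - p) * Fintype.card V +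
        r * ∑ T ∈ 𝒯, ((#T).choose (#T + 1 - r) : ℝ) * p ^ (#T + 1 - r) := by
  set bad : Finset V → ℕ := fun S => #{T ∈ 𝒯 | #(T \ S) < r}
  have hbad : ∀ S, (bad S : ℝ) = ∑ T ∈ 𝒯, if #T + 1 - r ≤ #(T ∩ S) then 1 else 0 := by
    intro S
    simp only [bad, card_filter, Nat.cast_sum, Nat.cast_ite, Nat.cast_one, Nat.cast_zero]
    refine sum_congr rfl fun T _ => if_congr ?_ rfl rfl
    have := card_sdiff_add_card_inter T S
    omega
  have hbad_exp : ∑ S, bernoulliWeight p S * bad S ≤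
      ∑ T ∈ 𝒯, ((#T).choose (#T + 1 - r) : ℝ) * p ^ (#T + 1 - r) := by
    calc ∑ S, bernoulliWeight p S * bad S
        = ∑ T ∈ 𝒯, ∑ S with #T + 1 - r ≤ #(T ∩ S), bernoulliWeight p S := by
          simp only [hbad, mul_sum, sum_filter, mul_ite, mul_one, mul_zero]
          exact sum_comm
      _ ≤ _ := sum_le_sum fun T _ =>
          sum_bernoulliWeight_filter_le_card_inter_le h0.le h1.le T _
  obtain ⟨S, hS⟩ := exists_le_of_le_sum_bernoulliWeight_mul h0 h1
    (f := fun S => (#S : ℝ) - r * bad S)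
    (t := p * Fintype.card V -
      r * ∑ T ∈ 𝒯, ((#T).choose (#T + 1 - r) : ℝ) * p ^ (#T + 1 - r)) <| by
    simp only [mul_sub, sum_sub_distrib, mul_left_comm _ (r : ℝ), ← mul_sum,
      sum_bernoulliWeight_mul_card]
    gcongr
  obtain ⟨C, hC, hcard⟩ := exists_multipleHitting_card_add_card_le 𝒯 h𝒯 S
  have hcard' : (#C : ℝ) + #S ≤ Fintype.card V + r * bad S := by exact_mod_cast hcard
  exact ⟨C, hC, by linarith⟩

end MultipleHitting

lemma choose_mul_pow_le {r d t : ℕ} {D p : ℝ} (hr : 1 ≤ r) (ht : r + d + 1 ≤ t) (htD : t ≤ D)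
    (h0 : 0 ≤ p) (h1 : p ≤ 1) :
    (t.choose (t + 1 - r) : ℝ) * p ^ (t + 1 - r) ≤ D ^ (r - 1) * p ^ (d + 2) := by
  have hchoose : (t.choose (t + 1 - r) : ℝ) ≤ D ^ (r - 1) := by
    rw [Nat.choose_symm_of_eq_add (show t = (t + 1 - r) + (r - 1) by omega)]
    calc (t.choose (r - 1) : ℝ) ≤ (t : ℝ) ^ (r - 1) := by exact_mod_cast Nat.choose_le_pow t _
      _ ≤ D ^ (r - 1) := pow_le_pow_left₀ (Nat.cast_nonneg t) htD _
  exact mul_le_mul hchoose (pow_le_pow_of_le_one h0 h1 (by omega))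
    (by positivity) (pow_nonneg ((Nat.cast_nonneg t).trans htD) _)

namespace SimpleGraph

lemma nontrivial_of_maxDegree_pos {V : Type*} [Fintype V] {G : SimpleGraph V}
    [DecidableRel G.Adj] (h : 0 < G.maxDegree) : Nontrivial V := by
  obtain ⟨v, hv⟩ : ∃ v, 0 < G.degree v := by
    by_contra! h0
    exact absurd (G.maxDegree_le_of_forall_degree_le 0 h0) (by omega)
  obtain ⟨w, hvw⟩ := (G.degree_pos_iff_exists_adj v).1 hv
  exact nontrivial_of_ne v w hvw.ne

variable {V : Type*} [Fintype V] [DecidableEq V] (G : SimpleGraph V) [DecidableRel G.Adj]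

def closedNeighborFinset (v : V) : Finset V := insert v (G.neighborFinset v)

def IsIdentificationCode (r : ℕ) (C : Finset V) : Prop :=
  ∀ u v, u ≠ v → r ≤ #((G.closedNeighborFinset v \ G.closedNeighborFinset u) ∩ C)

def HasStrongNeighborhoodProperty (k : ℕ) : Prop :=
  ∀ u v, u ≠ v → k ≤ #(G.closedNeighborFinset v \ G.closedNeighborFinset u)

/-- The sets `N[v] \ N[u]` with `u ≠ v`. Only `u` at distance at most two from `v` are listed
(with `N[v]` standing for `u = v`), since otherwise `N[v] \ N[u] = N[v]`; this keeps the family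
of size at most `n (Δ + 1)²`. -/
def separatingFamily : Finset (Finset V) :=
  univ.biUnion fun v => ((G.closedNeighborFinset v).biUnion G.closedNeighborFinset).image
    fun u => if u = v then G.closedNeighborFinset v
      else G.closedNeighborFinset v \ G.closedNeighborFinset u

variable {G}

lemma self_mem_closedNeighborFinset (v : V) : v ∈ G.closedNeighborFinset v :=
  mem_insert_self _ _

lemma mem_closedNeighborFinset_comm {v w : V} :
    w ∈ G.closedNeighborFinset v ↔ v ∈ G.closedNeighborFinset w := by
  simp only [closedNeighborFinset, mem_insert, mem_neighborFinset, eq_comm, G.adj_comm]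

lemma card_closedNeighborFinset_le (v : V) : #(G.closedNeighborFinset v) ≤ G.maxDegree + 1 :=
  (card_insert_le _ _).trans <| by
    rw [card_neighborFinset_eq_degree]
    exact Nat.add_le_add_right (G.degree_le_maxDegree v) 1

lemma IsIdentificationCode.exists_mem_closedNeighborFinset [Nontrivial V] {r : ℕ}
    {C : Finset V} (hr : 1 ≤ r) (hC : G.IsIdentificationCode r C) (v : V) :
    ∃ x ∈ C, v ∈ G.closedNeighborFinset x := by
  obtain ⟨u, hu⟩ := exists_ne v
  obtain ⟨x, hx⟩ := card_pos.1 (hr.trans (hC u v hu))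
  rw [mem_inter, mem_sdiff] at hx
  exact ⟨x, hx.2, mem_closedNeighborFinset_comm.1 hx.1.1⟩

lemma IsIdentificationCode.card_le_card_mul [Nontrivial V] {r : ℕ} {C : Finset V}
    (hr : 1 ≤ r) (hC : G.IsIdentificationCode r C) :
    Fintype.card V ≤ #C * (G.maxDegree + 1) := by
  have hcover : univ ⊆ C.biUnion G.closedNeighborFinset := fun v _ =>
    mem_biUnion.2 (hC.exists_mem_closedNeighborFinset hr v)
  calc Fintype.card V ≤ #(C.biUnion G.closedNeighborFinset) := card_le_card hcover
    _ ≤ #C * (G.maxDegree + 1) :=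
      card_biUnion_le_card_mul _ _ _ fun x _ => card_closedNeighborFinset_le x

lemma sdiff_mem_separatingFamily {u v : V} (huv : u ≠ v) :
    G.closedNeighborFinset v \ G.closedNeighborFinset u ∈ G.separatingFamily := by
  simp only [separatingFamily, mem_biUnion, mem_image, mem_univ, true_and]
  refine ⟨v, ?_⟩
  by_cases hdisj : Disjoint (G.closedNeighborFinset v) (G.closedNeighborFinset u)
  · exact ⟨v, ⟨v, self_mem_closedNeighborFinset v, self_mem_closedNeighborFinset v⟩,
      by rw [if_pos rfl, sdiff_eq_self_of_disjoint hdisj]⟩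
  · obtain ⟨w, hwv, hwu⟩ := not_disjoint_iff.1 hdisj
    exact ⟨u, ⟨w, hwv, mem_closedNeighborFinset_comm.1 hwu⟩, if_neg huv⟩

lemma card_separatingFamily_le :
    #G.separatingFamily ≤ Fintype.card V * (G.maxDegree + 1) ^ 2 := by
  rw [← card_univ]
  refine card_biUnion_le_card_mul _ _ _ fun v _ => card_image_le.trans ?_
  rw [sq]
  exact (card_biUnion_le_card_mul _ _ _ fun w _ => card_closedNeighborFinset_le w).trans
    (Nat.mul_le_mul_right _ (card_closedNeighborFinset_le v))

lemma card_le_of_mem_separatingFamily {T : Finset V} (hT : T ∈ G.separatingFamily) :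
    #T ≤ G.maxDegree + 1 := by
  simp only [separatingFamily, mem_biUnion, mem_image, mem_univ, true_and] at hT
  obtain ⟨v, u, -, rfl⟩ := hT
  refine le_trans (card_le_card ?_) (card_closedNeighborFinset_le v)
  split_ifs
  exacts [subset_rfl, sdiff_subset]

lemma HasStrongNeighborhoodProperty.le_card_of_mem_separatingFamily [Nontrivial V] {k : ℕ}
    (hG : G.HasStrongNeighborhoodProperty k) {T : Finset V} (hT : T ∈ G.separatingFamily) :
    k ≤ #T := by
  simp only [separatingFamily, mem_biUnion, mem_image, mem_univ, true_and] at hT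
  obtain ⟨v, u, -, rfl⟩ := hT
  split_ifs with huv
  · obtain ⟨w, hw⟩ := exists_ne v
    exact (hG w v hw).trans (card_le_card sdiff_subset)
  · exact hG u v huv

lemma HasStrongNeighborhoodProperty.exists_isIdentificationCode_card_le [Nontrivial V]
    {r d : ℕ} (hr : 1 ≤ r) (hG : G.HasStrongNeighborhoodProperty (r + d + 1)) {p : ℝ}
    (h0 : 0 < p) (h1 : p < 1) :
    ∃ C, G.IsIdentificationCode r C ∧ (#C : ℝ) ≤
      Fintype.card V * (1 - (p - r * ((G.maxDegree : ℝ) + 1) ^ (r + 1) * p ^ (d + 2))) := by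
  set D : ℝ := (G.maxDegree : ℝ) + 1 with hD
  have hsize := fun T (hT : T ∈ G.separatingFamily) => hG.le_card_of_mem_separatingFamily hT
  obtain ⟨C, hC, hcard⟩ := exists_multipleHitting_card_le G.separatingFamily (r := r)
    (fun T hT => (Nat.le_add_right r (d + 1)).trans (hsize T hT)) h0 h1
  refine ⟨C, fun u v huv => hC _ (sdiff_mem_separatingFamily huv), hcard.trans ?_⟩
  have hsum : ∑ T ∈ G.separatingFamily, ((#T).choose (#T + 1 - r) : ℝ) * p ^ (#T + 1 - r) ≤
      #G.separatingFamily * (D ^ (r - 1) * p ^ (d + 2)) := by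
    rw [← nsmul_eq_mul]
    refine sum_le_card_nsmul _ _ _ fun T hT => choose_mul_pow_le hr (hsize T hT) ?_ h0.le h1.le
    rw [hD]
    exact_mod_cast card_le_of_mem_separatingFamily hT
  have hfamily : (#G.separatingFamily : ℝ) ≤ Fintype.card V * D ^ 2 := by
    rw [hD]
    exact_mod_cast card_separatingFamily_le
  have hpow : D ^ 2 * D ^ (r - 1) = D ^ (r + 1) := by
    rw [← pow_add, show 2 + (r - 1) = r + 1 by omega]
  calc (1 - p) * Fintype.card V + r * ∑ T ∈ G.separatingFamily,
        ((#T).choose (#T + 1 - r) : ℝ) * p ^ (#T + 1 - r)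
      ≤ (1 - p) * Fintype.card V + r * (Fintype.card V * D ^ 2 * (D ^ (r - 1) * p ^ (d + 2))) := by
        gcongr
        exact hsum.trans (by gcongr)
    _ = Fintype.card V * (1 - (p - r * D ^ (r + 1) * p ^ (d + 2))) := by
        rw [← hpow]
        ring

end SimpleGraph

noncomputable def identificationCodeConst (d r : ℕ) : ℝ :=
  (d : ℝ) * ((d : ℝ) + 1) ^ (-(1 : ℝ) - 1 / d) * (2 * (r : ℝ)) ^ (-(1 : ℝ) / d)

lemma identificationCodeConst_div_eq {D : ℝ} (hD : 0 < D) {d : ℕ} (hd : 1 ≤ d) (r : ℕ) :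
    identificationCodeConst d r / D ^ (((r : ℝ) + 2) / d) =
      d / (d + 1) * (((d : ℝ) + 1) * (2 * r) * D ^ (r + 2)) ^ (-(1 : ℝ) / d) := by
  have hd0 : (0 : ℝ) < d + 1 := by positivity
  have hpow : (D ^ (r + 2)) ^ (-(1 : ℝ) / d) = (D ^ (((r : ℝ) + 2) / d))⁻¹ := by
    rw [← Real.rpow_natCast, ← Real.rpow_mul hD.le, ← Real.rpow_neg hD.le]
    push_cast
    ring_nf
  rw [Real.mul_rpow (by positivity) (by positivity), Real.mul_rpow hd0.le (by positivity), hpow,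
    identificationCodeConst, sub_eq_add_neg, Real.rpow_add hd0, Real.rpow_neg_one, neg_div]
  field_simp

lemma exists_identificationCodeConst_div_le {D : ℝ} (hD : 1 ≤ D) {r d : ℕ} (hr : 1 ≤ r)
    (hd : 1 ≤ d) :
    ∃ p : ℝ, 0 < p ∧ p < 1 ∧
      identificationCodeConst d r / D ^ (((r : ℝ) + 2) / d) ≤
        p - r * D ^ (r + 1) * p ^ (d + 2) := by
  set B : ℝ := ((d : ℝ) + 1) * (2 * r) * D ^ (r + 2)
  have hr' : (1 : ℝ) ≤ r := by exact_mod_cast hr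
  have hd' : (1 : ℝ) ≤ d := by exact_mod_cast hd
  have hB : 1 < B := by
    have : 1 ≤ D ^ (r + 2) := one_le_pow₀ hD
    have : (1 : ℝ) < ((d : ℝ) + 1) * (2 * r) := by nlinarith
    nlinarith
  have hexp : -(1 : ℝ) / d < 0 := by rw [neg_div, neg_lt_zero]; positivity
  -- chosen so that `c(d, r) / D ^ ((r + 2) / d) = d / (d + 1) * p`
  set p := B ^ (-(1 : ℝ) / d)
  have hp0 : 0 < p := Real.rpow_pos_of_pos (by linarith) _
  have hp1 : p < 1 := Real.rpow_lt_one_of_one_lt_of_neg hB hexp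
  have hpd : p ^ d = B⁻¹ := by
    rw [← Real.rpow_natCast, ← Real.rpow_mul (by linarith), div_mul_cancel₀ _ (by positivity),
      Real.rpow_neg_one]
  have hloss : r * D ^ (r + 1) * p ^ (d + 2) = p ^ 2 / (2 * (d + 1) * D) := by
    rw [pow_add p d 2, hpd]
    simp only [B]
    field_simp
    ring
  have hloss_le : p ^ 2 / (2 * (d + 1) * D) ≤ p / (d + 1) := by
    rw [div_le_div_iff₀ (by positivity) (by positivity)]
    have := mul_le_mul_of_nonneg_left (show p ≤ 2 * D by linarith)
      (by positivity : 0 ≤ p * ((d : ℝ) + 1))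
    nlinarith
  refine ⟨p, hp0, hp1, ?_⟩
  rw [identificationCodeConst_div_eq (by linarith) hd, hloss]
  have : (d : ℝ) / (d + 1) * p = p - p / (d + 1) := by field_simp; ring
  linarith

/-- Theorem 1 (main result): if `G` on `n` vertices with maximum degree `Δ ≥ 2` has the
`(r+d+1)`-strong neighbourhood property, then there is an identification code of index `r`
of size at most `n(1 - c(d,r)/(Δ+1)^{(r+2)/d})`, and every identification code of index `r`
has size at least `n/(Δ+1)`. -/
theorem stmt_11 {V : Type*} [Fintype V] [DecidableEq V]
    (G : SimpleGraph V) [DecidableRel G.Adj] (r d : ℕ) (hr : 1 ≤ r) (hd : 1 ≤ d)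
    (hΔ : 2 ≤ G.maxDegree)
    (hstrong : ∀ u v : V, u ≠ v →
      r + d + 1 ≤ ((insert v (G.neighborFinset v)) \ (insert u (G.neighborFinset u))).card) :
    (∃ C : Finset V,
        (∀ u v : V, u ≠ v →
          r ≤ (((insert v (G.neighborFinset v)) \ (insert u (G.neighborFinset u))) ∩ C).card) ∧
        (C.card : ℝ) ≤ (Fintype.card V : ℝ) *
          (1 - ((d:ℝ) * ((d:ℝ) + 1) ^ (-(1:ℝ) - 1 / d) * (2 * (r:ℝ)) ^ (-(1:ℝ) / d)) /
                ((G.maxDegree : ℝ) + 1) ^ (((r:ℝ) + 2) / d))) ∧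
      (∀ C : Finset V,
        (∀ u v : V, u ≠ v →
          r ≤ (((insert v (G.neighborFinset v)) \ (insert u (G.neighborFinset u))) ∩ C).card) →
        (Fintype.card V : ℝ) / ((G.maxDegree : ℝ) + 1) ≤ (C.card : ℝ)) := by
  have : Nontrivial V := G.nontrivial_of_maxDegree_pos (by omega)
  refine ⟨?_, fun C hC => ?_⟩
  · obtain ⟨p, hp0, hp1, hp⟩ := exists_identificationCodeConst_div_le
      (le_add_of_nonneg_left (Nat.cast_nonneg G.maxDegree)) hr hd
    obtain ⟨C, hC, hcard⟩ :=
      HasStrongNeighborhoodProperty.exists_isIdentificationCode_card_le hr hstrong hp0 hp1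
    exact ⟨C, hC, hcard.trans (by gcongr; exact hp)⟩
  · rw [div_le_iff₀ (by positivity)]
    exact_mod_cast IsIdentificationCode.card_le_card_mul hr hC
end

section
/- For every integer w ≥ 2, there exists M = M(w) and Δ* such that for all n ≥ M there exists a connected graph G on n vertices with maximum degree at most Δ* satisfying the w-strong neighbourhood property (for all distinct u, v: #(N[v] \ N[u]) ≥ w). In particular, for each fixed w, graphs with the w-strong neighbourhood property and uniformly bounded degree exist on all sufficiently many vertices. -/
/-!
Take the circulant graph on `ℤ/n` whose jumps are `±3^i` for `i < w + 4`. Since `n ≥ 3^(w+4)`, sums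
of two jumps do not wrap around, so by uniqueness of base-3 expansions the jump set `S` is a Sidon
set. The jump `1` makes the graph connected, and every degree is at most `2|S|`. For `u ≠ v` the
translates `v + s`, `s ∈ S`, lie in `N[v]`; such a translate lies in `N[u]` only if `s = u - v`,
`(v - u) + s ∈ S`, or `s + t = u - v` for some `t ∈ S`, and the Sidon property allows at most
`1 + 1 + 2` such `s`. Hence `|N[v] \ N[u]| ≥ |S| - 4 = w`.
-/

open Finset SimpleGraph

def IsSidon {A : Type*} [Add A] (S : Set A) : Prop :=
  ∀ ⦃a⦄, a ∈ S → ∀ ⦃b⦄, b ∈ S → ∀ ⦃c⦄, c ∈ S → ∀ ⦃d⦄, d ∈ S →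
    a + b = c + d → (a = c ∧ b = d) ∨ (a = d ∧ b = c)

namespace IsSidon

variable {A : Type*}

theorem mono [Add A] {S T : Set A} (hT : IsSidon T) (hST : S ⊆ T) : IsSidon S :=
  fun _ ha _ hb _ hc _ hd ↦ hT (hST ha) (hST hb) (hST hc) (hST hd)

theorem image_natCast {R : Type*} [AddMonoidWithOne R] [IsRightCancelAdd R] (n : ℕ) [CharP R n]
    {S : Set ℕ} (hS : IsSidon S) (hlt : ∀ a ∈ S, 2 * a < n) :
    IsSidon ((Nat.cast : ℕ → R) '' S) := by
  rintro _ ⟨a, ha, rfl⟩ _ ⟨b, hb, rfl⟩ _ ⟨c, hc, rfl⟩ _ ⟨d, hd, rfl⟩ h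
  have hsum : a + b = c + d := by
    refine CharP.natCast_injOn_Iio R n ?_ ?_ (by push_cast; exact h) <;>
      simp only [Set.mem_Iio] <;> linarith [hlt a ha, hlt b hb, hlt c hc, hlt d hd]
  rcases hS ha hb hc hd hsum with ⟨rfl, rfl⟩ | ⟨rfl, rfl⟩
  exacts [Or.inl ⟨rfl, rfl⟩, Or.inr ⟨rfl, rfl⟩]

variable [AddCommGroup A] [DecidableEq A] {S : Finset A}

theorem card_filter_add_mem_le_one (hS : IsSidon (S : Set A)) {d : A} (hd : d ≠ 0) :
    #{s ∈ S | d + s ∈ S} ≤ 1 := by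
  refine card_le_one.2 fun s hs s' hs' ↦ ?_
  simp only [mem_filter] at hs hs'
  have h : s + (d + s') = s' + (d + s) := by abel
  rcases hS hs.1 hs'.2 hs'.1 hs.2 h with ⟨h, -⟩ | ⟨h, -⟩
  · exact h
  · exact absurd (by simpa using congrArg (· - s) h.symm) hd

theorem card_filter_sub_mem_le_two (hS : IsSidon (S : Set A)) (c : A) :
    #{s ∈ S | c - s ∈ S} ≤ 2 := by
  rcases eq_empty_or_nonempty {s ∈ S | c - s ∈ S} with h | ⟨s₀, hs₀⟩
  · simp [h]
  simp only [mem_filter] at hs₀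
  calc #{s ∈ S | c - s ∈ S} ≤ #{s₀, c - s₀} := by
        refine card_le_card fun s hs ↦ ?_
        simp only [mem_filter] at hs
        have h : s + (c - s) = s₀ + (c - s₀) := by abel
        rcases hS hs.1 hs.2 hs₀.1 hs₀.2 h with ⟨rfl, -⟩ | ⟨rfl, -⟩ <;> simp
    _ ≤ 2 := card_le_two

theorem card_filter_add_eq_zero_or_mem_or_neg_mem_le_four (hS : IsSidon (S : Set A)) {d : A}
    (hd : d ≠ 0) : #{s ∈ S | d + s = 0 ∨ d + s ∈ S ∨ -(d + s) ∈ S} ≤ 4 := by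
  have hzero : #{s ∈ S | d + s = 0} ≤ 1 :=
    card_le_one.2 fun a ha b hb ↦
      add_left_cancel ((mem_filter.1 ha).2.trans (mem_filter.1 hb).2.symm)
  calc _ = #({s ∈ S | d + s = 0} ∪ {s ∈ S | d + s ∈ S} ∪ {s ∈ S | -d - s ∈ S}) := by
        simp only [filter_or, union_assoc, neg_add']
    _ ≤ 1 + 1 + 2 := by
      grw [card_union_le, card_union_le, hzero, hS.card_filter_add_mem_le_one hd,
        hS.card_filter_sub_mem_le_two]

end IsSidon

theorem Nat.pow_add_pow_eq_pow_add_pow_of_le {q a b c d : ℕ} (hq : 3 ≤ q) (hab : a ≤ b)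
    (hcd : c ≤ d) (h : q ^ a + q ^ b = q ^ c + q ^ d) : a = c ∧ b = d := by
  wlog hac : a ≤ c generalizing a b c d
  · exact (this hcd hab h.symm (le_of_not_ge hac)).imp Eq.symm Eq.symm
  obtain ⟨b, rfl⟩ := Nat.exists_eq_add_of_le hab
  obtain ⟨c, rfl⟩ := Nat.exists_eq_add_of_le hac
  obtain ⟨d, rfl⟩ := Nat.exists_eq_add_of_le (hac.trans hcd)
  have hpos : 0 < q ^ a := by positivity
  have h' : 1 + q ^ b = q ^ c + q ^ d := by
    apply Nat.eq_of_mul_eq_mul_left hpos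
    simpa only [pow_add, mul_add, mul_one] using h
  obtain rfl : c = 0 := by
    by_contra hc
    have hqc : q ∣ 1 + q ^ b := h' ▸ dvd_add (dvd_pow_self q hc) (dvd_pow_self q (by omega))
    rcases b with _ | b
    · exact absurd (Nat.le_of_dvd two_pos hqc) (by omega)
    · have hq1 := (Nat.dvd_add_left (dvd_pow_self q b.succ_ne_zero)).1 hqc
      exact absurd (Nat.le_of_dvd one_pos hq1) (by omega)
  refine ⟨by simp, ?_⟩
  simp only [pow_zero, add_right_inj] at h'
  rw [Nat.pow_right_injective (by omega : 2 ≤ q) h']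

theorem Nat.isSidon_range_pow {q : ℕ} (hq : 3 ≤ q) : IsSidon (Set.range (q ^ · : ℕ → ℕ)) := by
  rintro _ ⟨a, rfl⟩ _ ⟨b, rfl⟩ _ ⟨c, rfl⟩ _ ⟨d, rfl⟩ h
  dsimp only at h ⊢
  rcases le_total a b with hab | hba <;> rcases le_total c d with hcd | hdc
  · obtain ⟨rfl, rfl⟩ := pow_add_pow_eq_pow_add_pow_of_le hq hab hcd h
    simp
  · obtain ⟨rfl, rfl⟩ := pow_add_pow_eq_pow_add_pow_of_le hq hab hdc (h.trans (add_comm _ _))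
    simp
  · obtain ⟨rfl, rfl⟩ := pow_add_pow_eq_pow_add_pow_of_le hq hba hcd ((add_comm _ _).trans h)
    simp
  · obtain ⟨rfl, rfl⟩ := pow_add_pow_eq_pow_add_pow_of_le hq hba hdc
      ((add_comm _ _).trans (h.trans (add_comm _ _)))
    simp

namespace SimpleGraph

variable {A : Type*} [AddCommGroup A] [Fintype A] [DecidableEq A] {S : Finset A}
  [DecidableRel (circulantGraph (S : Set A)).Adj]

theorem circulantGraph_degree_le (u : A) : (circulantGraph (S : Set A)).degree u ≤ 2 * #S := by
  calc (circulantGraph (S : Set A)).degree u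
      ≤ #(S.image (u + ·) ∪ S.image (u - ·)) := by
        refine card_le_card fun v hv ↦ ?_
        rw [mem_neighborFinset, circulantGraph_adj] at hv
        simp only [mem_union, mem_image]
        rcases hv.2 with h | h
        · exact Or.inr ⟨u - v, h, sub_sub_cancel u v⟩
        · exact Or.inl ⟨v - u, h, add_sub_cancel u v⟩
    _ ≤ #S + #S := (card_union_le _ _).trans (add_le_add card_image_le card_image_le)
    _ = 2 * #S := (two_mul _).symm

theorem circulantGraph_card_le_card_closedNbhd_sdiff_add_four (hS : IsSidon (S : Set A))
    (h0 : (0 : A) ∉ S) {u v : A} (huv : u ≠ v) :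
    #S ≤ #(insert v ((circulantGraph (S : Set A)).neighborFinset v) \
      insert u ((circulantGraph (S : Set A)).neighborFinset u)) + 4 := by
  set Nu := insert u ((circulantGraph (S : Set A)).neighborFinset u)
  have hbad : #{s ∈ S | v + s ∈ Nu} ≤ 4 := by
    refine le_trans (card_le_card fun s hs ↦ ?_)
      (hS.card_filter_add_eq_zero_or_mem_or_neg_mem_le_four (sub_ne_zero.2 huv.symm))
    simp only [Nu, mem_filter, mem_insert, mem_neighborFinset, circulantGraph_adj,
      mem_coe] at hs ⊢
    refine ⟨hs.1, ?_⟩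
    rcases hs.2 with h | ⟨-, h | h⟩
    · left; rw [← h]; abel
    · right; right; convert h using 1; abel
    · right; left; convert h using 1; abel
  have hgood :
      #{s ∈ S | v + s ∉ Nu} ≤ #(insert v ((circulantGraph (S : Set A)).neighborFinset v) \ Nu) := by
    rw [← card_image_of_injective _ (add_right_injective v)]
    refine card_le_card fun x hx ↦ ?_
    obtain ⟨s, hs, rfl⟩ := mem_image.1 hx
    rw [mem_filter] at hs
    refine mem_sdiff.2 ⟨mem_insert_of_mem ?_, hs.2⟩
    rw [mem_neighborFinset, circulantGraph_adj]
    exact ⟨fun h ↦ h0 (left_eq_add.1 h ▸ hs.1), Or.inr (by simpa using hs.1)⟩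
  calc #S = #{s ∈ S | v + s ∈ Nu} + #{s ∈ S | v + s ∉ Nu} :=
        (card_filter_add_card_filter_not _).symm
    _ ≤ _ := by rw [add_comm]; exact add_le_add hgood hbad

theorem circulantGraph_connected_of_one_mem {m : ℕ} {s : Set (Fin (m + 1))} (h : 1 ∈ s) :
    (circulantGraph s).Connected := by
  refine (cycleGraph_connected (n := m)).mono ?_
  rw [cycleGraph_eq_circulantGraph]
  intro u v huv
  simp only [circulantGraph_adj, Set.mem_singleton_iff] at huv ⊢
  exact ⟨huv.1, huv.2.imp (fun e ↦ by rwa [e]) (fun e ↦ by rwa [e])⟩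

end SimpleGraph

theorem CharP.exists_isSidon_card_eq_of_three_pow_le (R : Type*) [AddMonoidWithOne R]
    [IsRightCancelAdd R] {n : ℕ} [CharP R n] {k : ℕ} (hk₀ : 0 < k) (hk : 3 ^ k ≤ n) :
    ∃ S : Finset R, IsSidon (S : Set R) ∧ (0 : R) ∉ S ∧ (1 : R) ∈ S ∧ #S = k := by
  classical
  set T : Finset ℕ := (range k).image (3 ^ ·)
  have hT : ∀ a ∈ T, 2 * a < n := by
    simp only [T, mem_image, mem_range, forall_exists_index, and_imp]
    rintro _ i hi rfl
    calc 2 * 3 ^ i < 3 * 3 ^ i := Nat.mul_lt_mul_of_pos_right (by norm_num) (by positivity)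
      _ = 3 ^ (i + 1) := by ring
      _ ≤ n := (Nat.pow_le_pow_right (by norm_num) hi).trans hk
  have hTn : ∀ a ∈ T, a < n := fun a ha ↦ by linarith [hT a ha]
  refine ⟨T.image Nat.cast, ?_, ?_, ?_, ?_⟩
  · rw [coe_image]
    refine ((Nat.isSidon_range_pow le_rfl).mono ?_).image_natCast n hT
    simp [T, Set.image_subset_iff]
  · simp only [mem_image, not_exists, not_and]
    intro a ha h
    rw [CharP.cast_eq_zero_iff R n] at h
    have : 0 < a := by simp only [T, mem_image] at ha; obtain ⟨i, -, rfl⟩ := ha; positivity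
    exact absurd (Nat.le_of_dvd this h) (by linarith [hTn a ha])
  · exact mem_image.2 ⟨1, mem_image.2 ⟨0, mem_range.2 hk₀, pow_zero 3⟩, Nat.cast_one⟩
  · rw [card_image_of_injOn ((CharP.natCast_injOn_Iio R n).mono hTn), card_image_of_injective _
      (Nat.pow_right_injective (by norm_num : 2 ≤ 3)), card_range]

theorem stmt_18_general (w : ℕ) :
    ∃ M Δstar : ℕ, ∀ n : ℕ, M ≤ n →
      ∃ G : SimpleGraph (Fin n),
        G.Connected ∧
        @SimpleGraph.maxDegree _ G _ (Classical.decRel _) ≤ Δstar ∧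
        ∀ u v : Fin n, u ≠ v →
          w ≤ (((insert v (@SimpleGraph.neighborFinset _ G v
                    (@SimpleGraph.neighborSetFintype _ G _ (Classical.decRel _) v)))
                \ (insert u (@SimpleGraph.neighborFinset _ G u
                    (@SimpleGraph.neighborSetFintype _ G _ (Classical.decRel _) u)))).card) := by
  refine ⟨3 ^ (w + 4), 2 * (w + 4), fun n hn ↦ ?_⟩
  obtain ⟨m, rfl⟩ : ∃ m, n = m + 1 := Nat.exists_eq_add_one.2 (lt_of_lt_of_le (by positivity) hn)
  obtain ⟨S, hS, h0, h1, hcard⟩ :=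
    open Fin.NatCast in CharP.exists_isSidon_card_eq_of_three_pow_le (Fin (m + 1)) (by omega) hn
  -- The statement uses classical decidability of adjacency, not the instance Mathlib provides.
  let := Classical.decRel (circulantGraph (S : Set (Fin (m + 1)))).Adj
  refine ⟨circulantGraph S, circulantGraph_connected_of_one_mem h1,
    maxDegree_le_of_forall_degree_le _ _ fun u ↦ hcard ▸ circulantGraph_degree_le u,
    fun u v huv ↦ ?_⟩
  have := circulantGraph_card_le_card_closedNbhd_sdiff_add_four hS h0 huv
  omega

/-- For every `w ≥ 2` there are `M` and `Δ*` such that for every `n ≥ M` there exists a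
connected graph on `n` vertices with maximum degree at most `Δ*` satisfying the
`w`-strong neighbourhood property. -/
theorem stmt_18 (w : ℕ) (hw : 2 ≤ w) :
    ∃ M Δstar : ℕ, ∀ n : ℕ, M ≤ n →
      ∃ G : SimpleGraph (Fin n),
        G.Connected ∧
        @SimpleGraph.maxDegree _ G _ (Classical.decRel _) ≤ Δstar ∧
        ∀ u v : Fin n, u ≠ v →
          w ≤ (((insert v (@SimpleGraph.neighborFinset _ G v
                    (@SimpleGraph.neighborSetFintype _ G _ (Classical.decRel _) v)))
                \ (insert u (@SimpleGraph.neighborFinset _ G u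
                    (@SimpleGraph.neighborSetFintype _ G _ (Classical.decRel _) u)))).card) :=
  stmt_18_general w
end
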